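/- arXiv:1412.4656 — 2 statements merged into one kernel-verified Lean document; each statement's English description precedes it below -/
import Mathlib

section
/- Let M be a compact smooth manifold without boundary, f : M → M a C¹ diffeomorphism, Λ ⊆ M a compact f-invariant set carrying a dominated splitting T_ΛM = E ⊕ F, and let p ∈ Λ be a hyperbolic periodic point of f of period τ whose index is at least dim E. Then: (i) for every x ∈ orb(p), E(x) is contained in the stable subspace E^s(x) of the hyperbolic splitting of orb(p); and (ii) there exist an integer m₀ ∈ ℕ and a constant λ₀ ∈ (0,1) such that for every m ≥ m₀, ∏_{0 ≤ i < τ} ‖Df^m|E(f^i(p))‖ < λ₀^{m·τ}. -/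
open Manifold Filter Topology Function
open scoped TensorProduct

noncomputable section

/-- The model space `ℝ^d`. -/
abbrev Euc (d : ℕ) := EuclideanSpace ℝ (Fin d)

variable (d : ℕ) {M : Type*} [MetricSpace M] [CompactSpace M]
  [ChartedSpace (Euc d) M] [IsManifold (𝓡 d) ((⊤ : ℕ∞) : WithTop ℕ∞) M]

/-- The derivative of `f` at `x`, viewed as a linear endomorphism of the model space `ℝ^d`
(the tangent spaces are identified with `ℝ^d`). -/
def Dop (f : M → M) (x : M) : Euc d →L[ℝ] Euc d := mfderiv (𝓡 d) (𝓡 d) f x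

/-- The operator norm `‖A|V‖` of the restriction of `A` to the subspace `V`. -/
def normOn (A : Euc d →L[ℝ] Euc d) (V : Submodule ℝ (Euc d)) : ℝ := ‖A.comp V.subtypeL‖

/-- A `C¹` diffeomorphism of `M`. -/
structure C1Diffeo (d : ℕ) (M : Type*) [MetricSpace M]
    [ChartedSpace (Euc d) M] where
  toFun : M → M
  invFun : M → M
  left_inv : Function.LeftInverse invFun toFun
  right_inv : Function.RightInverse invFun toFun
  contMDiff_toFun : ContMDiff (𝓡 d) (𝓡 d) 1 toFun
  contMDiff_invFun : ContMDiff (𝓡 d) (𝓡 d) 1 invFun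

instance : CoeFun (C1Diffeo d M) (fun _ => M → M) := ⟨C1Diffeo.toFun⟩

/-- The `C¹` distance on `Diff¹(M)`. -/
def c1Dist (f g : C1Diffeo d M) : ℝ :=
  (⨆ x : M, dist (f.toFun x) (g.toFun x)) + (⨆ x : M, ‖Dop d f.toFun x - Dop d g.toFun x‖)
  + (⨆ x : M, dist (f.invFun x) (g.invFun x)) + (⨆ x : M, ‖Dop d f.invFun x - Dop d g.invFun x‖)

def c1Ball (f : C1Diffeo d M) (ε : ℝ) : Set (C1Diffeo d M) := {g | c1Dist d f g < ε}

/-- `U` is a neighborhood of `f` in the `C¹` topology. -/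
def C1Nhd (f : C1Diffeo d M) (U : Set (C1Diffeo d M)) : Prop :=
  f ∈ U ∧ ∃ ε > 0, c1Ball d f ε ⊆ U

def C1Open (U : Set (C1Diffeo d M)) : Prop := ∀ f ∈ U, ∃ ε > 0, c1Ball d f ε ⊆ U

def C1Dense (U : Set (C1Diffeo d M)) : Prop :=
  ∀ f : C1Diffeo d M, ∀ ε > 0, (c1Ball d f ε ∩ U).Nonempty

/-- A residual subset of `Diff¹(M)`: one containing a countable intersection of dense
open subsets. -/
def C1Residual (R : Set (C1Diffeo d M)) : Prop :=
  ∃ s : ℕ → Set (C1Diffeo d M), (∀ n, C1Open d (s n) ∧ C1Dense d (s n)) ∧ (⋂ n, s n) ⊆ R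

/-- The (forward) orbit of a point. For a periodic point this is the full orbit. -/
def orbitOf (f : M → M) (p : M) : Set M := {y | ∃ n : ℕ, f^[n] p = y}

/-- The stable space `E^s(a) = {v : ‖Df^n_a v‖ → 0}`. -/
def stableSubmodule (f : M → M) (a : M) : Submodule ℝ (Euc d) where
  carrier := {v | Tendsto (fun n : ℕ => ‖Dop d (f^[n]) a v‖) atTop (𝓝 0)}
  zero_mem' := by
    simp
  add_mem' := by
    intro v w hv hw
    have h := hv.add hw
    rw [add_zero] at h
    refine squeeze_zero (fun n => norm_nonneg _) (fun n => ?_) h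
    simpa [map_add] using norm_add_le (Dop d (f^[n]) a v) (Dop d (f^[n]) a w)
  smul_mem' := by
    intro c v hv
    have h : Tendsto (fun n : ℕ => ‖c‖ * ‖Dop d (f^[n]) a v‖) atTop (𝓝 0) := by
      have := (hv : Tendsto (fun n : ℕ => ‖Dop d (f^[n]) a v‖) atTop (𝓝 0)).const_mul ‖c‖
      simpa using this
    show Tendsto _ atTop (𝓝 0)
    refine h.congr fun n => ?_
    rw [map_smul, norm_smul]

/-- A hyperbolic splitting over an invariant set `Λ`, for the diffeomorphism `f`. -/
structure HypSplitting (f : C1Diffeo d M) (Λ : Set M) where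
  Es : M → Submodule ℝ (Euc d)
  Eu : M → Submodule ℝ (Euc d)
  C : ℝ
  lam : ℝ
  C_pos : 0 < C
  lam_mem : lam ∈ Set.Ioo (0:ℝ) 1
  inf_eq_bot : ∀ x ∈ Λ, Es x ⊓ Eu x = ⊥
  sup_eq_top : ∀ x ∈ Λ, Es x ⊔ Eu x = ⊤
  invariant_Es : ∀ x ∈ Λ, (Es x).map (Dop d f.toFun x).toLinearMap = Es (f.toFun x)
  invariant_Eu : ∀ x ∈ Λ, (Eu x).map (Dop d f.toFun x).toLinearMap = Eu (f.toFun x)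
  contracting : ∀ x ∈ Λ, ∀ n : ℕ, normOn d (Dop d (f.toFun^[n]) x) (Es x) ≤ C * lam ^ n
  expanding : ∀ x ∈ Λ, ∀ n : ℕ, normOn d (Dop d (f.invFun^[n]) x) (Eu x) ≤ C * lam ^ n

/-- A compact invariant set is hyperbolic if it carries a hyperbolic splitting. -/
def IsHyperbolicSet (f : C1Diffeo d M) (Λ : Set M) : Prop := Nonempty (HypSplitting d f Λ)

/-- `p` is a hyperbolic periodic point of `f`. -/
def IsHypPeriodicPt (f : C1Diffeo d M) (p : M) : Prop :=
  (∃ τ : ℕ, 0 < τ ∧ f.toFun^[τ] p = p) ∧ IsHyperbolicSet d f (orbitOf f.toFun p)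

/-- The index of a hyperbolic periodic point: the dimension of its stable space. -/
def ind (f : C1Diffeo d M) (p : M) : ℕ := Module.finrank ℝ (stableSubmodule d f.toFun p)

/-- The stable set of the orbit of `p` for the diffeomorphism `f`. -/
def Wstable (f : C1Diffeo d M) (p : M) : Set M :=
  {z | ∃ p' ∈ orbitOf f.toFun p,
    Tendsto (fun n : ℕ => dist (f.toFun^[n] z) (f.toFun^[n] p')) atTop (𝓝 0)}

/-- The unstable set of the orbit of `p` for the diffeomorphism `f`. -/
def Wunstable (f : C1Diffeo d M) (p : M) : Set M :=
  {z | ∃ p' ∈ orbitOf f.toFun p,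
    Tendsto (fun n : ℕ => dist (f.invFun^[n] z) (f.invFun^[n] p')) atTop (𝓝 0)}

/-- There is a transverse intersection point of `W^u(orb p)` and `W^s(orb q)`. -/
def TransverseInt (f : C1Diffeo d M) (p q : M) : Prop :=
  ∃ a, a ∈ Wunstable d f p ∧ a ∈ Wstable d f q ∧
    stableSubmodule d f.invFun a ⊔ stableSubmodule d f.toFun a = ⊤

/-- Two hyperbolic periodic points are homoclinically related. -/
def HomRelated (f : C1Diffeo d M) (p q : M) : Prop :=
  TransverseInt d f p q ∧ TransverseInt d f q p

/-- The homoclinic class of `p`: the closure of the set of hyperbolic periodic points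
homoclinically related to `p`. -/
def homoclinicClass (f : C1Diffeo d M) (p : M) : Set M :=
  closure {q | IsHypPeriodicPt d f q ∧ HomRelated d f p q}

/-- An `(m, λ)`-dominated splitting `E ⊕ F` over the invariant set `Λ`. -/
structure IsDomSplitting (f : C1Diffeo d M) (Λ : Set M)
    (E F : M → Submodule ℝ (Euc d)) (m : ℕ) (lam : ℝ) : Prop where
  m_pos : 0 < m
  lam_mem : lam ∈ Set.Ioo (0:ℝ) 1
  inf_eq_bot : ∀ x ∈ Λ, E x ⊓ F x = ⊥
  sup_eq_top : ∀ x ∈ Λ, E x ⊔ F x = ⊤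
  invariant_E : ∀ x ∈ Λ, (E x).map (Dop d f.toFun x).toLinearMap = E (f.toFun x)
  invariant_F : ∀ x ∈ Λ, (F x).map (Dop d f.toFun x).toLinearMap = F (f.toFun x)
  const_dim : ∀ x ∈ Λ, ∀ y ∈ Λ, Module.finrank ℝ (E x) = Module.finrank ℝ (E y)
  dominated : ∀ x ∈ Λ,
    normOn d (Dop d (f.toFun^[m]) x) (E x)
      * normOn d (Dop d (f.invFun^[m]) (f.toFun^[m] x)) (F (f.toFun^[m] x)) < lam

/-- The bundle `E` is (uniformly) contracted over `Λ`. -/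
def IsContracted (f : C1Diffeo d M) (Λ : Set M) (E : M → Submodule ℝ (Euc d)) : Prop :=
  ∃ C > 0, ∃ lam ∈ Set.Ioo (0:ℝ) 1, ∀ x ∈ Λ, ∀ n : ℕ,
    normOn d (Dop d (f.toFun^[n]) x) (E x) ≤ C * lam ^ n

/-- `x` is a `λ`-`E`-Pliss point for the map `g`. -/
def IsPlissPt (g : M → M) (E : M → Submodule ℝ (Euc d)) (lam : ℝ) (x : M) : Prop :=
  ∀ n : ℕ, 1 ≤ n →
    ∏ i ∈ Finset.range n, normOn d (Dop d g (g^[i] x)) (E (g^[i] x)) ≤ lam ^ n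

/-- A set `K` is a `λ`-`E`-weak set: it contains no `λ`-`E`-Pliss point. -/
def IsWeakSet (g : M → M) (E : M → Submodule ℝ (Euc d)) (lam : ℝ) (K : Set M) : Prop :=
  ∀ x ∈ K, ¬ IsPlissPt d g E lam x

/-- `x` is a `λ`-bi-Pliss point: a `λ`-`E`-Pliss point for `f` and a `λ`-`F`-Pliss point
for `f⁻¹`. -/
def IsBiPlissPt (f : C1Diffeo d M) (E F : M → Submodule ℝ (Euc d)) (lam : ℝ) (x : M) : Prop :=
  IsPlissPt d f.toFun E lam x ∧ IsPlissPt d f.invFun F lam x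

/-- The ω-limit set of `y` under the map `g`: the set of accumulation points of the
forward orbit of `y`. -/
def omegaLim (g : M → M) (y : M) : Set M :=
  {z | ∃ φ : ℕ → ℕ, StrictMono φ ∧ Tendsto (fun n => g^[φ n] y) atTop (𝓝 z)}

/-- The α-limit set of `y` under the diffeomorphism `f`: the set of accumulation points of
the backward orbit of `y`. -/
def alphaLim (f : C1Diffeo d M) (y : M) : Set M := omegaLim f.invFun y

/-- `b` is chain attainable from `a` for the map `g`: for every `ε > 0` there is an
`ε`-pseudo-orbit from `a` to `b`. -/
def ChainAttain (g : M → M) (a b : M) : Prop :=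
  ∀ ε > 0, ∃ (n : ℕ) (x : ℕ → M), 1 ≤ n ∧ x 0 = a ∧ x n = b ∧
    ∀ i < n, dist (g (x i)) (x (i + 1)) < ε

/-- The chain recurrence class of `p` for the map `g`. -/
def chainClass (g : M → M) (p : M) : Set M :=
  {z | ChainAttain g z p ∧ ChainAttain g p z}

/-- The set of Lyapunov exponents of a periodic orbit of period `τ`:
the numbers `(1/τ) log |μ|` over the complex eigenvalues `μ` of the complexification of
`D(f^τ)_p`. -/
def lyapunovExps (f : M → M) (p : M) (τ : ℕ) : Set ℝ :=
  {χ | ∃ μ : ℂ,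
    Module.End.HasEigenvalue (LinearMap.baseChange ℂ (Dop d (f^[τ]) p).toLinearMap) μ ∧
    χ = Real.log (‖μ‖) / τ}

/-- The spectral radius of the restriction of `A` to an `A`-invariant subspace `V`:
the supremum of the moduli of the complex eigenvalues of the complexification of the
restriction `A|V`. -/
def spectralRadiusOn (A : Euc d →L[ℝ] Euc d) (V : Submodule ℝ (Euc d))
    (h : ∀ v ∈ V, A v ∈ V) : ℝ :=
  sSup {r | ∃ μ : ℂ,
    Module.End.HasEigenvalue (LinearMap.baseChange ℂ (A.toLinearMap.restrict h)) μ ∧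
    r = ‖μ‖}

end


/-!
Iterating the domination along blocks of `m` steps, `‖Df^{km} u‖ ‖w‖ ≤ λ^k ‖Df^{km} w‖ ‖u‖` for
`u ∈ E(p)`, `w ∈ F(p)`. If some `v ∈ E(p)` is not in `E^s(p)`, its unstable component makes
`‖Df^{km} v‖` blow up. Domination then forbids nonzero vectors of `F(p)` in `E^s(p)`, so by
`dim E(p) ≤ dim E^s(p)` we get `E^s(p) ⊕ F(p) = ℝ^d`; writing `v = s + w` accordingly,
`‖Df^{km} v‖ ‖w‖ ≤ λ^k (‖Df^{km} v‖ + ‖Df^{km} s‖) ‖v‖` is impossible as `k → ∞`.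
Invariance carries `E ≤ E^s` along the orbit, and the uniform contraction of `E^s` gives the
estimate on the products.
-/

section LinearAlgebra

variable {V : Type*} [NormedAddCommGroup V] [NormedSpace ℝ V]

lemma tendsto_norm_apply_atTop_of_notMem (A : ℕ → V →ₗ[ℝ] V) {S U : Submodule ℝ V}
    (hSU : S ⊔ U = ⊤) (hS : ∀ s ∈ S, Tendsto (fun k => ‖A k s‖) atTop (𝓝 0))
    (hU : ∀ u ∈ U, u ≠ 0 → Tendsto (fun k => ‖A k u‖) atTop atTop) {v : V} (hv : v ∉ S) :
    Tendsto (fun k => ‖A k v‖) atTop atTop := by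
  obtain ⟨s, hs, u, hu, rfl⟩ := Submodule.mem_sup.1 (show v ∈ S ⊔ U by simp [hSU])
  have hu0 : u ≠ 0 := by rintro rfl; exact hv (by simpa using hs)
  refine tendsto_atTop_mono (fun k => ?_) ((hU u hu hu0).atTop_add (hS s hs).neg)
  have : ‖A k u‖ ≤ ‖A k (s + u)‖ + ‖A k s‖ := by
    rw [map_add]; simpa using norm_sub_le (A k s + A k u) (A k s)
  linarith

lemma sup_eq_top_of_disjoint_of_finrank_le [FiniteDimensional ℝ V] {E F S : Submodule ℝ V}
    (hEF : E ⊔ F = ⊤) (hSF : Disjoint S F) (hdim : Module.finrank ℝ E ≤ Module.finrank ℝ S) :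
    S ⊔ F = ⊤ := by
  refine Submodule.eq_top_of_finrank_eq (le_antisymm (Submodule.finrank_le _) ?_)
  have h₁ := Submodule.finrank_sup_add_finrank_inf_eq S F
  have h₂ := Submodule.finrank_add_le_finrank_add_finrank E F
  rw [hSF.eq_bot, finrank_bot, add_zero] at h₁
  rw [hEF, finrank_top] at h₂
  omega

lemma le_of_dominated_of_hyperbolic [FiniteDimensional ℝ V] (A : ℕ → V →ₗ[ℝ] V)
    {E F S U : Submodule ℝ V} (hEF : E ⊔ F = ⊤) (hSU : S ⊔ U = ⊤)
    (hS : ∀ s ∈ S, Tendsto (fun k => ‖A k s‖) atTop (𝓝 0))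
    (hU : ∀ u ∈ U, u ≠ 0 → Tendsto (fun k => ‖A k u‖) atTop atTop)
    {lam : ℝ} (hlam₀ : 0 ≤ lam) (hlam₁ : lam < 1)
    (hdom : ∀ k, ∀ u ∈ E, ∀ w ∈ F, ‖A k u‖ * ‖w‖ ≤ lam ^ k * (‖A k w‖ * ‖u‖))
    (hdim : Module.finrank ℝ E ≤ Module.finrank ℝ S) : E ≤ S := by
  intro v hvE
  by_contra hvS
  have hv := tendsto_norm_apply_atTop_of_notMem A hSU hS hU hvS
  have hlam := tendsto_pow_atTop_nhds_zero_of_lt_one hlam₀ hlam₁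
  have hSF : Disjoint S F := by
    refine Submodule.disjoint_def.2 fun w hwS hwF => by_contra fun hw => ?_
    have hlim : Tendsto (fun k => lam ^ k * (‖A k w‖ * ‖v‖)) atTop (𝓝 0) := by
      simpa using hlam.mul ((hS w hwS).mul_const ‖v‖)
    exact not_tendsto_atTop_of_tendsto_nhds hlim
      (tendsto_atTop_mono (fun k => hdom k v hvE w hwF) (hv.atTop_mul_const (norm_pos_iff.2 hw)))
  obtain ⟨s, hs, w, hw, rfl⟩ := Submodule.mem_sup.1
    (show v ∈ S ⊔ F by simp [sup_eq_top_of_disjoint_of_finrank_le hEF hSF hdim])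
  have hw0 : w ≠ 0 := by rintro rfl; exact hvS (by simpa using hs)
  have hgap : Tendsto (fun k => ‖w‖ - lam ^ k * ‖s + w‖) atTop (𝓝 ‖w‖) := by
    simpa using tendsto_const_nhds.sub (hlam.mul_const ‖s + w‖)
  have hlim : Tendsto (fun k => lam ^ k * (‖A k s‖ * ‖s + w‖)) atTop (𝓝 0) := by
    simpa using hlam.mul ((hS s hs).mul_const ‖s + w‖)
  refine not_tendsto_atTop_of_tendsto_nhds hlim
    (tendsto_atTop_mono (fun k => ?_) (hv.atTop_mul_pos (norm_pos_iff.2 hw0) hgap))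
  have h₁ := hdom k (s + w) hvE w hw
  have h₂ : ‖A k w‖ ≤ ‖A k (s + w)‖ + ‖A k s‖ := by
    rw [map_add]; simpa using norm_sub_le (A k s + A k w) (A k s)
  have : 0 ≤ lam ^ k * ‖s + w‖ := by positivity
  nlinarith

end LinearAlgebra

lemma exists_mul_pow_lt_pow (C : ℝ) {lam : ℝ} (h₀ : 0 ≤ lam) (h₁ : lam < 1) :
    ∃ m₀ : ℕ, ∃ lam₀ ∈ Set.Ioo (0 : ℝ) 1, ∀ m ≥ m₀, C * lam ^ m < lam₀ ^ m := by
  obtain ⟨lam₀, hlt, hlam₀₁⟩ := exists_between h₁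
  have hlam₀ : 0 < lam₀ := h₀.trans_lt hlt
  have hev : ∀ᶠ m in atTop, C * (lam / lam₀) ^ m < 1 := by
    have h := (tendsto_pow_atTop_nhds_zero_of_lt_one (div_nonneg h₀ hlam₀.le)
      ((div_lt_one hlam₀).2 hlt)).const_mul C
    rw [mul_zero] at h
    exact h.eventually_lt_const one_pos
  obtain ⟨m₀, hm₀⟩ := eventually_atTop.1 hev
  refine ⟨m₀, lam₀, ⟨hlam₀, hlam₀₁⟩, fun m hm => ?_⟩
  have h := hm₀ m hm
  rwa [div_pow, ← mul_div_assoc, div_lt_one (pow_pos hlam₀ m)] at h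

section NormOn

variable {d : ℕ}

lemma normOn_nonneg (A : Euc d →L[ℝ] Euc d) (V : Submodule ℝ (Euc d)) : 0 ≤ normOn d A V :=
  norm_nonneg (A.comp V.subtypeL)

lemma norm_apply_le_normOn (A : Euc d →L[ℝ] Euc d) {V : Submodule ℝ (Euc d)} {v : Euc d}
    (hv : v ∈ V) : ‖A v‖ ≤ normOn d A V * ‖v‖ :=
  (A.comp V.subtypeL).le_opNorm ⟨v, hv⟩

lemma normOn_le_of_forall_le (A : Euc d →L[ℝ] Euc d) (V : Submodule ℝ (Euc d)) {c : ℝ}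
    (hc : 0 ≤ c) (h : ∀ v ∈ V, ‖A v‖ ≤ c * ‖v‖) : normOn d A V ≤ c :=
  ContinuousLinearMap.opNorm_le_bound _ hc fun v => h v v.2

lemma normOn_mono (A : Euc d →L[ℝ] Euc d) {V W : Submodule ℝ (Euc d)} (h : V ≤ W) :
    normOn d A V ≤ normOn d A W :=
  normOn_le_of_forall_le A V (normOn_nonneg A W) fun _ hv => norm_apply_le_normOn A (h hv)

lemma normOn_comp_le (A B : Euc d →L[ℝ] Euc d) {V W : Submodule ℝ (Euc d)}
    (h : ∀ v ∈ V, A v ∈ W) : normOn d (B.comp A) V ≤ normOn d B W * normOn d A V := by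
  refine normOn_le_of_forall_le _ V (by positivity [normOn_nonneg B W, normOn_nonneg A V])
    fun v hv => ?_
  calc ‖B (A v)‖ ≤ normOn d B W * ‖A v‖ := norm_apply_le_normOn B (h v hv)
    _ ≤ normOn d B W * (normOn d A V * ‖v‖) := by
      gcongr
      · exact normOn_nonneg B W
      · exact norm_apply_le_normOn A hv
    _ = _ := (mul_assoc _ _ _).symm

lemma normOn_id_le_one (V : Submodule ℝ (Euc d)) :
    normOn d (ContinuousLinearMap.id ℝ (Euc d)) V ≤ 1 :=
  normOn_le_of_forall_le _ V zero_le_one fun v _ => by simp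

end NormOn

section Iterate

variable {d : ℕ} {M : Type*} [MetricSpace M] [ChartedSpace (Euc d) M]

lemma Dop_iterate_zero (g : M → M) (x : M) :
    Dop d (g^[0]) x = ContinuousLinearMap.id ℝ (Euc d) :=
  mfderiv_id

lemma Dop_iterate_add {g : M → M} (hg : ContMDiff (𝓡 d) (𝓡 d) 1 g) (x : M) (a b : ℕ) :
    Dop d (g^[a + b]) x = (Dop d (g^[a]) (g^[b] x)).comp (Dop d (g^[b]) x) := by
  rw [Dop, iterate_add]
  exact mfderiv_comp x ((hg.iterate a).mdifferentiableAt one_ne_zero)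
    ((hg.iterate b).mdifferentiableAt one_ne_zero)

lemma C1Diffeo.Dop_invFun_iterate_comp (f : C1Diffeo d M) (x : M) (n : ℕ) :
    (Dop d (f.invFun^[n]) (f.toFun^[n] x)).comp (Dop d (f.toFun^[n]) x)
      = ContinuousLinearMap.id ℝ (Euc d) := by
  have h := mfderiv_comp x ((f.contMDiff_invFun.iterate n).mdifferentiableAt one_ne_zero)
    ((f.contMDiff_toFun.iterate n).mdifferentiableAt one_ne_zero)
  rw [(f.left_inv.iterate n).comp_eq_id, mfderiv_id] at h
  exact h.symm

lemma C1Diffeo.Dop_invFun_iterate_apply (f : C1Diffeo d M) (x : M) (n : ℕ) (v : Euc d) :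
    Dop d (f.invFun^[n]) (f.toFun^[n] x) (Dop d (f.toFun^[n]) x v) = v := by
  rw [← ContinuousLinearMap.comp_apply, f.Dop_invFun_iterate_comp, ContinuousLinearMap.id_apply]

end Iterate

section InvariantSubbundle

variable {d : ℕ} {M : Type*} [MetricSpace M] [ChartedSpace (Euc d) M]

def IsInvariantSubbundle (f : C1Diffeo d M) (S : Set M) (V : M → Submodule ℝ (Euc d)) : Prop :=
  Set.MapsTo f.toFun S S ∧ ∀ x ∈ S, (V x).map (Dop d f.toFun x).toLinearMap = V (f.toFun x)

namespace IsInvariantSubbundle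

variable {f : C1Diffeo d M} {S : Set M} {V : M → Submodule ℝ (Euc d)} {x : M}

lemma map_Dop_iterate (hV : IsInvariantSubbundle f S V) (hx : x ∈ S) (n : ℕ) :
    (V x).map (Dop d (f.toFun^[n]) x).toLinearMap = V (f.toFun^[n] x) := by
  induction n with
  | zero => rw [Dop_iterate_zero, ContinuousLinearMap.coe_id, Submodule.map_id, iterate_zero_apply]
  | succ n ih =>
    rw [Nat.add_comm, Dop_iterate_add f.contMDiff_toFun, ContinuousLinearMap.toLinearMap_comp,
      Submodule.map_comp, ih, iterate_one, hV.2 _ (hV.1.iterate n hx), iterate_add_apply,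
      iterate_one]

lemma Dop_iterate_mem (hV : IsInvariantSubbundle f S V) (hx : x ∈ S) (n : ℕ) {v : Euc d}
    (hv : v ∈ V x) : Dop d (f.toFun^[n]) x v ∈ V (f.toFun^[n] x) :=
  hV.map_Dop_iterate hx n ▸ Submodule.mem_map_of_mem hv

lemma Dop_invFun_iterate_mem (hV : IsInvariantSubbundle f S V) (hx : x ∈ S) (n : ℕ)
    {w : Euc d} (hw : w ∈ V (f.toFun^[n] x)) : Dop d (f.invFun^[n]) (f.toFun^[n] x) w ∈ V x := by
  rw [← hV.map_Dop_iterate hx n] at hw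
  obtain ⟨v, hv, rfl⟩ := hw
  rwa [ContinuousLinearMap.coe_coe, f.Dop_invFun_iterate_apply]

lemma norm_le_normOn_invFun_mul (hV : IsInvariantSubbundle f S V) (hx : x ∈ S) (n : ℕ)
    {v : Euc d} (hv : v ∈ V x) :
    ‖v‖ ≤ normOn d (Dop d (f.invFun^[n]) (f.toFun^[n] x)) (V (f.toFun^[n] x))
      * ‖Dop d (f.toFun^[n]) x v‖ := by
  conv_lhs => rw [← f.Dop_invFun_iterate_apply x n v]
  exact norm_apply_le_normOn _ (hV.Dop_iterate_mem hx n hv)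

lemma normOn_Dop_iterate_add_le (hV : IsInvariantSubbundle f S V) (hx : x ∈ S) (a b : ℕ) :
    normOn d (Dop d (f.toFun^[a + b]) x) (V x)
      ≤ normOn d (Dop d (f.toFun^[a]) (f.toFun^[b] x)) (V (f.toFun^[b] x))
        * normOn d (Dop d (f.toFun^[b]) x) (V x) := by
  rw [Dop_iterate_add f.contMDiff_toFun]
  exact normOn_comp_le _ _ fun v hv => hV.Dop_iterate_mem hx b hv

lemma normOn_Dop_invFun_iterate_add_le (hV : IsInvariantSubbundle f S V) (hx : x ∈ S)
    (a b : ℕ) :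
    normOn d (Dop d (f.invFun^[a + b]) (f.toFun^[a + b] x)) (V (f.toFun^[a + b] x))
      ≤ normOn d (Dop d (f.invFun^[b]) (f.toFun^[b] x)) (V (f.toFun^[b] x))
        * normOn d (Dop d (f.invFun^[a]) (f.toFun^[a + b] x)) (V (f.toFun^[a + b] x)) := by
  have hback : f.invFun^[a] (f.toFun^[a + b] x) = f.toFun^[b] x := by
    rw [iterate_add_apply]; exact f.left_inv.iterate a _
  rw [Nat.add_comm a b, Dop_iterate_add f.contMDiff_invFun, Nat.add_comm b a, hback]
  refine normOn_comp_le _ _ fun w hw => ?_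
  rw [iterate_add_apply] at hw ⊢
  exact hV.Dop_invFun_iterate_mem (hV.1.iterate b hx) a hw

end IsInvariantSubbundle

end InvariantSubbundle

section Splittings

variable {d : ℕ} {M : Type*} [MetricSpace M] [ChartedSpace (Euc d) M]
  {f : C1Diffeo d M} {Λ : Set M} {x : M}

namespace IsDomSplitting

variable {E F : M → Submodule ℝ (Euc d)} {m : ℕ} {lam : ℝ}

lemma normOn_mul_normOn_le_pow (D : IsDomSplitting d f Λ E F m lam) (hΛ : Set.MapsTo f.toFun Λ Λ)
    (hx : x ∈ Λ) (k : ℕ) :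
    normOn d (Dop d (f.toFun^[k * m]) x) (E x)
      * normOn d (Dop d (f.invFun^[k * m]) (f.toFun^[k * m] x)) (F (f.toFun^[k * m] x))
      ≤ lam ^ k := by
  induction k with
  | zero =>
    simp only [zero_mul, pow_zero, Dop_iterate_zero]
    exact mul_le_one₀ (normOn_id_le_one _) (normOn_nonneg _ _) (normOn_id_le_one _)
  | succ k ih =>
    have hE : IsInvariantSubbundle f Λ E := ⟨hΛ, D.invariant_E⟩
    have hF : IsInvariantSubbundle f Λ F := ⟨hΛ, D.invariant_F⟩
    have hy := D.dominated _ (hΛ.iterate (k * m) hx)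
    rw [← iterate_add_apply] at hy
    rw [show (k + 1) * m = m + k * m by ring]
    calc _ ≤ (normOn d (Dop d (f.toFun^[m]) (f.toFun^[k * m] x)) (E (f.toFun^[k * m] x))
            * normOn d (Dop d (f.toFun^[k * m]) x) (E x))
          * (normOn d (Dop d (f.invFun^[k * m]) (f.toFun^[k * m] x)) (F (f.toFun^[k * m] x))
            * normOn d (Dop d (f.invFun^[m]) (f.toFun^[m + k * m] x))
                (F (f.toFun^[m + k * m] x))) :=
          mul_le_mul (hE.normOn_Dop_iterate_add_le hx m (k * m))
            (hF.normOn_Dop_invFun_iterate_add_le hx m (k * m)) (normOn_nonneg _ _)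
            (mul_nonneg (normOn_nonneg _ _) (normOn_nonneg _ _))
      _ = (normOn d (Dop d (f.toFun^[m]) (f.toFun^[k * m] x)) (E (f.toFun^[k * m] x))
            * normOn d (Dop d (f.invFun^[m]) (f.toFun^[m + k * m] x))
                (F (f.toFun^[m + k * m] x)))
          * (normOn d (Dop d (f.toFun^[k * m]) x) (E x)
            * normOn d (Dop d (f.invFun^[k * m]) (f.toFun^[k * m] x))
                (F (f.toFun^[k * m] x))) := by ring
      _ ≤ lam * lam ^ k :=
          mul_le_mul hy.le ih (mul_nonneg (normOn_nonneg _ _) (normOn_nonneg _ _))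
            D.lam_mem.1.le
      _ = lam ^ (k + 1) := (pow_succ' lam k).symm

lemma norm_mul_norm_le (D : IsDomSplitting d f Λ E F m lam) (hΛ : Set.MapsTo f.toFun Λ Λ)
    (hx : x ∈ Λ) (k : ℕ) {u w : Euc d} (hu : u ∈ E x) (hw : w ∈ F x) :
    ‖Dop d (f.toFun^[k * m]) x u‖ * ‖w‖ ≤ lam ^ k * (‖Dop d (f.toFun^[k * m]) x w‖ * ‖u‖) := by
  set a := normOn d (Dop d (f.toFun^[k * m]) x) (E x)
  set b := normOn d (Dop d (f.invFun^[k * m]) (f.toFun^[k * m] x)) (F (f.toFun^[k * m] x))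
  calc _ ≤ (a * ‖u‖) * (b * ‖Dop d (f.toFun^[k * m]) x w‖) :=
        mul_le_mul (norm_apply_le_normOn _ hu)
          (IsInvariantSubbundle.norm_le_normOn_invFun_mul ⟨hΛ, D.invariant_F⟩ hx _ hw)
          (norm_nonneg w) (by positivity [normOn_nonneg (Dop d (f.toFun^[k * m]) x) (E x)])
    _ = (a * b) * (‖Dop d (f.toFun^[k * m]) x w‖ * ‖u‖) := by ring
    _ ≤ _ := mul_le_mul_of_nonneg_right (D.normOn_mul_normOn_le_pow hΛ hx k) (by positivity)

end IsDomSplitting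

namespace HypSplitting

variable (H : HypSplitting d f Λ)

lemma tendsto_norm_Dop_iterate_of_mem_Es (hx : x ∈ Λ) {v : Euc d} (hv : v ∈ H.Es x) :
    Tendsto (fun n => ‖Dop d (f.toFun^[n]) x v‖) atTop (𝓝 0) := by
  have hlim : Tendsto (fun n => H.C * H.lam ^ n * ‖v‖) atTop (𝓝 0) := by
    simpa using ((tendsto_pow_atTop_nhds_zero_of_lt_one H.lam_mem.1.le H.lam_mem.2).const_mul
      H.C).mul_const ‖v‖
  refine squeeze_zero (fun _ => norm_nonneg _) (fun n => ?_) hlim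
  exact (norm_apply_le_normOn _ hv).trans
    (mul_le_mul_of_nonneg_right (H.contracting x hx n) (norm_nonneg v))

lemma tendsto_norm_Dop_iterate_of_mem_Eu (hΛ : Set.MapsTo f.toFun Λ Λ) (hx : x ∈ Λ) {v : Euc d}
    (hv : v ∈ H.Eu x) (hv0 : v ≠ 0) :
    Tendsto (fun n => ‖Dop d (f.toFun^[n]) x v‖) atTop atTop := by
  have hC := H.C_pos
  obtain ⟨hlam₀, hlam₁⟩ := H.lam_mem
  have hgrow : Tendsto (fun n => ‖v‖ / H.C * H.lam⁻¹ ^ n) atTop atTop :=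
    (tendsto_pow_atTop_atTop_of_one_lt (one_lt_inv₀ hlam₀ |>.2 hlam₁)).const_mul_atTop
      (by positivity [norm_pos_iff.2 hv0])
  refine tendsto_atTop_mono (fun n => ?_) hgrow
  have h := (IsInvariantSubbundle.norm_le_normOn_invFun_mul ⟨hΛ, H.invariant_Eu⟩ hx n hv).trans
    (mul_le_mul_of_nonneg_right (H.expanding _ (hΛ.iterate n hx) n) (norm_nonneg _))
  rw [inv_pow, ← div_eq_mul_inv, div_div, div_le_iff₀ (by positivity)]
  linarith [h]

lemma exists_prod_normOn_lt_pow {V : M → Submodule ℝ (Euc d)} (hV : ∀ x ∈ Λ, V x ≤ H.Es x)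
    {τ : ℕ} (hτ : 0 < τ) (q : ℕ → M) (hq : ∀ i, q i ∈ Λ) :
    ∃ m₀ : ℕ, ∃ lam₀ ∈ Set.Ioo (0 : ℝ) 1, ∀ m : ℕ, m₀ ≤ m →
      ∏ i ∈ Finset.range τ, normOn d (Dop d (f.toFun^[m]) (q i)) (V (q i)) < lam₀ ^ (m * τ) := by
  obtain ⟨m₀, lam₀, hlam₀, hm₀⟩ := exists_mul_pow_lt_pow H.C H.lam_mem.1.le H.lam_mem.2
  refine ⟨m₀, lam₀, hlam₀, fun m hm => ?_⟩
  calc ∏ i ∈ Finset.range τ, normOn d (Dop d (f.toFun^[m]) (q i)) (V (q i))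
      ≤ ∏ _i ∈ Finset.range τ, H.C * H.lam ^ m :=
        Finset.prod_le_prod (fun _ _ => normOn_nonneg _ _) fun i _ =>
          (normOn_mono _ (hV _ (hq i))).trans (H.contracting _ (hq i) m)
    _ = (H.C * H.lam ^ m) ^ τ := by rw [Finset.prod_const, Finset.card_range]
    _ < (lam₀ ^ m) ^ τ :=
        pow_lt_pow_left₀ (hm₀ m hm) (mul_pos H.C_pos (pow_pos H.lam_mem.1 m)).le hτ.ne'
    _ = lam₀ ^ (m * τ) := (pow_mul lam₀ m τ).symm

end HypSplitting

lemma IsDomSplitting.le_Es_of_finrank_le {O : Set M} {E F : M → Submodule ℝ (Euc d)}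
    {m : ℕ} {lam : ℝ} (D : IsDomSplitting d f Λ E F m lam) (hΛ : Set.MapsTo f.toFun Λ Λ)
    (H : HypSplitting d f O) (hO : Set.MapsTo f.toFun O O) {p : M} (hpΛ : p ∈ Λ) (hpO : p ∈ O)
    (hind : Module.finrank ℝ (E p) ≤ Module.finrank ℝ (H.Es p)) : E p ≤ H.Es p := by
  have hkm : Tendsto (fun k => k * m) atTop atTop :=
    tendsto_atTop_mono (fun k => Nat.le_mul_of_pos_right k D.m_pos) tendsto_id
  exact le_of_dominated_of_hyperbolic (fun k => (Dop d (f.toFun^[k * m]) p).toLinearMap)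
    (D.sup_eq_top p hpΛ) (H.sup_eq_top p hpO)
    (fun s hs => (H.tendsto_norm_Dop_iterate_of_mem_Es hpO hs).comp hkm)
    (fun u hu hu0 => (H.tendsto_norm_Dop_iterate_of_mem_Eu hO hpO hu hu0).comp hkm)
    D.lam_mem.1.le D.lam_mem.2 (fun k _ hu _ hw => D.norm_mul_norm_le hΛ hpΛ k hu hw) hind

end Splittings

theorem statement9_general (d : ℕ) (M : Type*) [MetricSpace M]
    [ChartedSpace (Euc d) M]
    (f : C1Diffeo d M) (Λ : Set M) (hinv : f.toFun '' Λ = Λ)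
    (E F : M → Submodule ℝ (Euc d))
    (hds : ∃ m lam, IsDomSplitting d f Λ E F m lam)
    (p : M) (hpΛ : p ∈ Λ) (τ : ℕ)
    (hτpos : 0 < τ)
    (H : HypSplitting d f (orbitOf f.toFun p))
    (hind : Module.finrank ℝ (E p) ≤ Module.finrank ℝ (H.Es p)) :
    (∀ x ∈ orbitOf f.toFun p, E x ≤ H.Es x) ∧
    ∃ m₀ : ℕ, ∃ lam₀ ∈ Set.Ioo (0:ℝ) 1, ∀ m : ℕ, m₀ ≤ m →
      ∏ i ∈ Finset.range τ,
          normOn d (Dop d (f.toFun^[m]) (f.toFun^[i] p)) (E (f.toFun^[i] p))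
        < lam₀ ^ (m * τ) := by
  obtain ⟨m, lam, D⟩ := hds
  have hΛ : Set.MapsTo f.toFun Λ Λ := fun _ hx => hinv ▸ Set.mem_image_of_mem f.toFun hx
  have hpO : p ∈ orbitOf f.toFun p := ⟨0, rfl⟩
  have hO : Set.MapsTo f.toFun (orbitOf f.toFun p) (orbitOf f.toFun p) := by
    rintro _ ⟨n, rfl⟩
    exact ⟨n + 1, iterate_succ_apply' f.toFun n p⟩
  have hEp : E p ≤ H.Es p := D.le_Es_of_finrank_le hΛ H hO hpΛ hpO hind
  have hE : ∀ x ∈ orbitOf f.toFun p, E x ≤ H.Es x := by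
    rintro _ ⟨n, rfl⟩
    rw [← IsInvariantSubbundle.map_Dop_iterate ⟨hΛ, D.invariant_E⟩ hpΛ n,
      ← IsInvariantSubbundle.map_Dop_iterate ⟨hO, H.invariant_Es⟩ hpO n]
    exact Submodule.map_mono hEp
  exact ⟨hE, H.exists_prod_normOn_lt_pow hE hτpos _ fun i => ⟨i, rfl⟩⟩

/-- If `Λ` carries a dominated splitting `E ⊕ F` and `p ∈ Λ` is a
hyperbolic periodic point of period `τ` whose index is at least `dim E`, then `E` is
contained in the stable bundle over `orb(p)`, and the products of the `E`-norms of `Df^m`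
along the orbit of `p` are exponentially small for large `m`. -/
theorem statement9 (d : ℕ) (M : Type*) [MetricSpace M] [CompactSpace M]
    [ChartedSpace (Euc d) M] [IsManifold (𝓡 d) ((⊤ : ℕ∞) : WithTop ℕ∞) M]
    (f : C1Diffeo d M) (Λ : Set M) (hcomp : IsCompact Λ) (hinv : f.toFun '' Λ = Λ)
    (E F : M → Submodule ℝ (Euc d))
    (hds : ∃ m lam, IsDomSplitting d f Λ E F m lam)
    (p : M) (hpΛ : p ∈ Λ) (τ : ℕ) (hτ : τ = Function.minimalPeriod f.toFun p)
    (hτpos : 0 < τ) (hper : f.toFun^[τ] p = p)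
    (H : HypSplitting d f (orbitOf f.toFun p))
    (hind : Module.finrank ℝ (E p) ≤ Module.finrank ℝ (H.Es p)) :
    (∀ x ∈ orbitOf f.toFun p, E x ≤ H.Es x) ∧
    ∃ m₀ : ℕ, ∃ lam₀ ∈ Set.Ioo (0:ℝ) 1, ∀ m : ℕ, m₀ ≤ m →
      ∏ i ∈ Finset.range τ,
          normOn d (Dop d (f.toFun^[m]) (f.toFun^[i] p)) (E (f.toFun^[i] p))
        < lam₀ ^ (m * τ) :=
  statement9_general d M f Λ hinv E F hds p hpΛ τ hτpos H hind
end

section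
/- Let X be a compact metric space, T : X → X a continuous map, φ : X → ℝ continuous, K ⊆ X a nonempty compact T-invariant set, and γ ∈ ℝ. Assume that for every x ∈ K there exists an integer n ≥ 1 with ∑_{i=0}^{n−1} φ(T^i(x)) > n·γ. Then for every γ' < γ there exist an open set U ⊇ K and a constant C ≥ 0 such that: for every x ∈ X and every integer L ≥ 1 with T^i(x) ∈ U for all 0 ≤ i < L, one has ∑_{i=0}^{L−1} φ(T^i(x)) ≥ L·γ' − C. -/
open Filter

/-- If every point of a compact invariant set `K` has some finite-time
Birkhoff sum of `φ` above `γ`, then orbit segments staying in a suitable neighborhood of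
`K` have Birkhoff sums bounded below by `L·γ' - C`, for any `γ' < γ`. -/
theorem statement11 {X : Type*} [MetricSpace X] [CompactSpace X]
    (T : X → X) (hT : Continuous T) (φ : X → ℝ) (hφ : Continuous φ)
    (K : Set X) (hKne : K.Nonempty) (hKcomp : IsCompact K) (hKinv : T '' K ⊆ K)
    (γ : ℝ) (h : ∀ x ∈ K, ∃ n : ℕ, 1 ≤ n ∧ (n : ℝ) * γ < ∑ i ∈ Finset.range n, φ (T^[i] x)) :
    ∀ γ' < γ, ∃ U : Set X, IsOpen U ∧ K ⊆ U ∧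
      ∃ C : ℝ, 0 ≤ C ∧
        ∀ (x : X) (L : ℕ), 1 ≤ L → (∀ i < L, T^[i] x ∈ U) →
          (L : ℝ) * γ' - C ≤ ∑ i ∈ Finset.range L, φ (T^[i] x) := by
  intro γ' hγ'
  classical
  have hcont : ∀ m : ℕ, Continuous fun y => ∑ i ∈ Finset.range m, φ (T^[i] y) := by
    intro m
    exact continuous_finset_sum _ fun i _ => hφ.comp (hT.iterate i)
  have hcov : ∀ x ∈ K, ∃ V : Set X, IsOpen V ∧ x ∈ V ∧ ∃ m : ℕ, 1 ≤ m ∧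
      ∀ y ∈ V, (m : ℝ) * γ' < ∑ i ∈ Finset.range m, φ (T^[i] y) := by
    intro x hx
    obtain ⟨m, hm1, hm2⟩ := h x hx
    refine ⟨{y | (m : ℝ) * γ' < ∑ i ∈ Finset.range m, φ (T^[i] y)},
      isOpen_lt continuous_const (hcont m), ?_, m, hm1, fun y hy => hy⟩
    have hmpos : (0 : ℝ) < m := by exact_mod_cast hm1
    have : (m : ℝ) * γ' < (m : ℝ) * γ := mul_lt_mul_of_pos_left hγ' hmpos
    exact lt_trans this hm2
  choose V hVopen hVmem m hm1 hVprop using hcov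
  obtain ⟨t, ht⟩ := hKcomp.elim_nhds_subcover' (fun x hx => V x hx)
    (fun x hx => (hVopen x hx).mem_nhds (hVmem x hx))
  set U : Set X := ⋃ x ∈ t, V x x.2 with hU
  have hUopen : IsOpen U := isOpen_biUnion fun x _ => hVopen x x.2
  set N : ℕ := t.sup fun x => m x x.2 with hN
  have hUkey : ∀ y ∈ U, ∃ k : ℕ, 1 ≤ k ∧ k ≤ N ∧
      (k : ℝ) * γ' < ∑ i ∈ Finset.range k, φ (T^[i] y) := by
    intro y hy
    simp only [hU, Set.mem_iUnion] at hy
    obtain ⟨x, hxt, hyV⟩ := hy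
    exact ⟨m x x.2, hm1 x x.2, Finset.le_sup (f := fun x : ↑K => m x.1 x.2) hxt, hVprop x x.2 y hyV⟩
  obtain ⟨M, hM⟩ := isCompact_univ.exists_bound_of_continuousOn hφ.continuousOn
  set M0 : ℝ := max M 0 with hM0
  have hM0nn : 0 ≤ M0 := le_max_right _ _
  have hMb : ∀ y : X, -M0 ≤ φ y := by
    intro y
    have h1 : |φ y| ≤ M0 := le_trans (hM y (Set.mem_univ _)) (le_max_left _ _)
    linarith [(abs_le.mp h1).1]
  refine ⟨U, hUopen, ht, N * (M0 + |γ'|), by positivity, ?_⟩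
  have key : ∀ L : ℕ, ∀ x : X, (∀ i < L, T^[i] x ∈ U) →
      (L : ℝ) * γ' - N * (M0 + |γ'|) ≤ ∑ i ∈ Finset.range L, φ (T^[i] x) := by
    intro L
    induction L using Nat.strong_induction_on with
    | _ L IH =>
      intro x hx
      by_cases hL : L ≤ N
      · have h1 : (L : ℕ) • (-M0) ≤ ∑ i ∈ Finset.range L, φ (T^[i] x) := by
          have := Finset.card_nsmul_le_sum (Finset.range L)
            (fun i => φ (T^[i] x)) (-M0) (fun i _ => hMb _)
          simpa using this
        rw [nsmul_eq_mul] at h1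
        have hLN : (L : ℝ) ≤ N := by exact_mod_cast hL
        have h2 : (L : ℝ) * γ' ≤ (L : ℝ) * |γ'| :=
          mul_le_mul_of_nonneg_left (le_abs_self _) (Nat.cast_nonneg _)
        have h3 : (L : ℝ) * |γ'| ≤ (N : ℝ) * |γ'| :=
          mul_le_mul_of_nonneg_right hLN (abs_nonneg _)
        have h4 : (L : ℝ) * M0 ≤ (N : ℝ) * M0 :=
          mul_le_mul_of_nonneg_right hLN hM0nn
        nlinarith
      · push_neg at hL
        have hLpos : 0 < L := lt_of_le_of_lt (Nat.zero_le _) hL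
        have hxU : x ∈ U := by simpa using hx 0 hLpos
        obtain ⟨k, hk1, hkN, hksum⟩ := hUkey x hxU
        have hkL : k ≤ L := le_trans hkN hL.le
        have hsplit : ∑ i ∈ Finset.range L, φ (T^[i] x) =
            (∑ i ∈ Finset.range k, φ (T^[i] x)) +
            ∑ i ∈ Finset.range (L - k), φ (T^[i] (T^[k] x)) := by
          have h0 : L = k + (L - k) := (Nat.add_sub_cancel' hkL).symm
          conv_lhs => rw [h0]
          rw [Finset.sum_range_add]
          congr 1
          apply Finset.sum_congr rfl
          intro i _
          rw [add_comm, Function.iterate_add_apply]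
        have hx' : ∀ i < L - k, T^[i] (T^[k] x) ∈ U := by
          intro i hi
          rw [← Function.iterate_add_apply]
          exact hx (i + k) (by omega)
        have hIH := IH (L - k) (by omega) (T^[k] x) hx'
        have hcast : ((L - k : ℕ) : ℝ) = (L : ℝ) - k := by
          rw [Nat.cast_sub hkL]
        rw [hsplit]
        rw [hcast] at hIH
        linarith
  intro x L _ hx
  exact key L x hx
end
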